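/- arXiv:math/0602035 — 2 statements merged into one kernel-verified Lean document; each statement's English description precedes it below -/
import Mathlib

section
/- Let (Ω,Σ,Pr) be a probability space, A_i ∈ Σ for i ∈ ℕ, and S_l := Σ_{1≤i₁<…<i_l} Pr(A_{i₁}∩…∩A_{i_l}). Fix k ∈ ℕ. Then the identity Pr(⋃_{1≤i₁<…<i_k} (A_{i₁}∩…∩A_{i_k})) = Σ_{j=0}^∞ (-1)^j C(j+k-1, k-1) S_{j+k} (with the series converging) holds if and only if every S_l is finite and l^{k-1} S_l → 0 as l → ∞. -/
open MeasureTheory Filter ENNReal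

noncomputable def S {Ω : Type*} [MeasurableSpace Ω] (μ : Measure Ω) (A : ℕ → Set Ω) (k : ℕ) :
    ℝ≥0∞ :=
  ∑' s : {s : Finset ℕ // s.card = k}, μ (⋂ i ∈ (s : Finset ℕ), A i)

def unionInter {Ω : Type*} (A : ℕ → Set Ω) (k : ℕ) : Set Ω :=
  ⋃ s : {s : Finset ℕ // s.card = k}, ⋂ i ∈ (s : Finset ℕ), A i

open Finset ENNReal

def gZ (q n m : ℕ) : ℤ :=
  ∑ j ∈ Finset.range n, (-1 : ℤ) ^ j * ((q + j).choose q) * (m.choose (q + 1 + j))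

def EZ (q n m : ℕ) : ℤ :=
  (-1 : ℤ) ^ n * ((if q + 1 ≤ m then 1 else 0) - gZ q n m)

lemma neg_one_pow_mul_self (n : ℕ) : (-1 : ℤ) ^ n * (-1) ^ n = 1 := by
  rw [← pow_add]
  exact Even.neg_one_pow ⟨n, by ring⟩

lemma EZ_add (q n m : ℕ) :
    EZ q n m + EZ q (n + 1) m = ((q + n).choose q : ℤ) * (m.choose (q + 1 + n)) := by
  unfold EZ gZ
  rw [Finset.sum_range_succ, pow_succ]
  linear_combination (((q + n).choose q : ℤ) * (m.choose (q + 1 + n))) * neg_one_pow_mul_self n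

lemma gZ_zero_m (q n : ℕ) : gZ q n 0 = 0 := by
  unfold gZ
  refine Finset.sum_eq_zero fun j _ => ?_
  rw [show q + 1 + j = (q + j) + 1 by omega, Nat.choose_zero_succ]
  simp

lemma EZ_zero_q (n m : ℕ) : EZ 0 n (m + 1) = ((m.choose n : ℤ)) := by
  induction n with
  | zero => simp [EZ, gZ]
  | succ n ih =>
      have h := EZ_add 0 n (m + 1)
      rw [ih] at h
      have h2 : (m + 1).choose (0 + 1 + n) = m.choose n + m.choose (n + 1) := by
        rw [show 0 + 1 + n = n + 1 by omega]
        exact Nat.choose_succ_succ m n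
      rw [h2] at h
      simp only [Nat.zero_add, Nat.choose_zero_right] at h
      push_cast at h ⊢
      linarith

lemma gZ_rec (p n m : ℕ) :
    gZ (p + 1) (n + 1) (m + 1) = gZ (p + 1) (n + 1) m + gZ p (n + 1) m - gZ (p + 1) n m := by
  have key : ∀ j : ℕ, (-1 : ℤ) ^ j * ((p + 1 + j).choose (p + 1)) * ((m + 1).choose (p + 1 + 1 + j))
      = (-1 : ℤ) ^ j * ((p + 1 + j).choose (p + 1)) * (m.choose (p + 1 + 1 + j))
        + (-1 : ℤ) ^ j * ((p + j).choose p) * (m.choose (p + 1 + j))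
        + (-1 : ℤ) ^ j * ((p + j).choose (p + 1)) * (m.choose (p + 1 + j)) := by
    intro j
    have h1 : (m + 1).choose (p + 1 + 1 + j) = m.choose (p + 1 + j) + m.choose (p + 1 + 1 + j) := by
      rw [show p + 1 + 1 + j = (p + 1 + j) + 1 by omega]
      exact Nat.choose_succ_succ m (p + 1 + j)
    have h2 : (p + 1 + j).choose (p + 1) = (p + j).choose p + (p + j).choose (p + 1) := by
      rw [show p + 1 + j = (p + j) + 1 by omega]
      exact Nat.choose_succ_succ (p + j) p
    rw [h1, h2]
    push_cast
    ring
  have hB : (∑ j ∈ Finset.range (n + 1),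
      (-1 : ℤ) ^ j * ((p + j).choose (p + 1)) * (m.choose (p + 1 + j))) = - gZ (p + 1) n m := by
    rw [Finset.sum_range_succ']
    have h0 : ((p + 0).choose (p + 1) : ℤ) = 0 := by
      rw [show p + 0 = p by omega, Nat.choose_succ_self]
      norm_num
    rw [h0]
    unfold gZ
    simp only [mul_zero, zero_mul, add_zero]
    rw [← Finset.sum_neg_distrib]
    refine Finset.sum_congr rfl fun i _ => ?_
    rw [show p + (i + 1) = p + 1 + i by omega, show p + 1 + (i + 1) = p + 1 + 1 + i by omega,
      pow_succ]
    ring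
  have lhs : gZ (p + 1) (n + 1) (m + 1) = gZ (p + 1) (n + 1) m + gZ p (n + 1) m
      + ∑ j ∈ Finset.range (n + 1), (-1 : ℤ) ^ j * ((p + j).choose (p + 1)) * (m.choose (p + 1 + j)) := by
    unfold gZ
    rw [← Finset.sum_add_distrib, ← Finset.sum_add_distrib]
    exact Finset.sum_congr rfl fun j _ => key j
  rw [lhs, hB]
  ring

lemma EZ_rec (p n m : ℕ) :
    EZ (p + 1) (n + 1) (m + 1) = EZ (p + 1) (n + 1) m + EZ p (n + 1) m + EZ (p + 1) n m := by
  unfold EZ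
  rw [gZ_rec]
  have hχ : (if p + 1 + 1 ≤ m + 1 then (1 : ℤ) else 0) = (if p + 1 ≤ m then 1 else 0) := by
    simp [Nat.succ_le_succ_iff]
  rw [hχ, pow_succ]
  ring

lemma EZ_nonneg (q n m : ℕ) : 0 ≤ EZ q n m := by
  induction m generalizing q n with
  | zero =>
      unfold EZ
      rw [gZ_zero_m]
      simp
  | succ m ih =>
      match n, q with
      | 0, q =>
          unfold EZ gZ
          simp only [pow_zero, Finset.range_zero, Finset.sum_empty, one_mul, sub_zero]
          split_ifs <;> norm_num
      | n + 1, 0 =>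
          rw [EZ_zero_q]
          positivity
      | n + 1, p + 1 =>
          rw [EZ_rec]
          have h1 := ih (p + 1) (n + 1)
          have h2 := ih p (n + 1)
          have h3 := ih (p + 1) n
          linarith
open ENNReal in
/-- `chE l m` : number of `l`-subsets of a set of size `m ∈ ℕ∞`, valued in `ℝ≥0∞` (for `l ≥ 1`). -/
noncomputable def chE (l : ℕ) : ℕ∞ → ℝ≥0∞ :=
  ENat.recTopCoe ⊤ (fun m => (m.choose l : ℝ≥0∞))

/-- Nonnegative Bonferroni remainder, extended to `ℕ∞`. -/
noncomputable def EeE (q n : ℕ) : ℕ∞ → ℝ≥0∞ :=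
  ENat.recTopCoe (if n = 0 then 1 else ⊤) (fun m => ((EZ q n m).toNat : ℝ≥0∞))

/-- Indicator of `k ≤ m`. -/
noncomputable def chiE (k : ℕ) : ℕ∞ → ℝ≥0∞ := fun m => if (k : ℕ∞) ≤ m then 1 else 0

lemma EZ_toNat_add (q n m : ℕ) :
    (EZ q n m).toNat + (EZ q (n + 1) m).toNat = (q + n).choose q * m.choose (q + 1 + n) := by
  have h := EZ_add q n m
  have h1 := EZ_nonneg q n m
  have h2 := EZ_nonneg q (n + 1) m
  have h3 : ((q + n).choose q : ℤ) * (m.choose (q + 1 + n))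
      = (((q + n).choose q * m.choose (q + 1 + n) : ℕ) : ℤ) := by push_cast; ring
  omega

lemma EeE_add (q n : ℕ) (m : ℕ∞) :
    EeE q n m + EeE q (n + 1) m = ((q + n).choose q : ℝ≥0∞) * chE (q + 1 + n) m := by
  induction m using ENat.recTopCoe with
  | top =>
      have hc : ((q + n).choose q : ℝ≥0∞) ≠ 0 := by
        exact_mod_cast Nat.pos_iff_ne_zero.mp (Nat.choose_pos (by omega))
      simp only [EeE, chE, ENat.recTopCoe_top]
      rw [ENNReal.mul_top hc]
      cases n <;> simp
  | coe m =>
      simp only [EeE, chE, ENat.recTopCoe_coe]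
      rw [← Nat.cast_add, EZ_toNat_add]
      push_cast
      ring

lemma main_nat (q n m : ℕ) :
    (∑ j ∈ Finset.range n, if Even j then (q + j).choose q * m.choose (q + 1 + j) else 0)
      + (if Even n then (EZ q n m).toNat else 0)
    = (if q + 1 ≤ m then 1 else 0)
      + (∑ j ∈ Finset.range n, if Even j then 0 else (q + j).choose q * m.choose (q + 1 + j))
      + (if Even n then 0 else (EZ q n m).toNat) := by
  have hg : gZ q n m =
      ((∑ j ∈ Finset.range n, if Even j then (q + j).choose q * m.choose (q + 1 + j) else 0 : ℕ) : ℤ)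
      - ((∑ j ∈ Finset.range n, if Even j then 0 else (q + j).choose q * m.choose (q + 1 + j) : ℕ) : ℤ) := by
    unfold gZ
    push_cast
    rw [← Finset.sum_sub_distrib]
    refine Finset.sum_congr rfl fun j _ => ?_
    rcases Nat.even_or_odd j with hj | hj
    · rw [hj.neg_one_pow, if_pos hj, if_pos hj]
      push_cast
      ring
    · rw [hj.neg_one_pow, if_neg (Nat.not_even_iff_odd.mpr hj), if_neg (Nat.not_even_iff_odd.mpr hj)]
      push_cast
      ring
  have hE : EZ q n m = (-1 : ℤ) ^ n * ((if q + 1 ≤ m then 1 else 0) - gZ q n m) := rfl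
  have hEn := EZ_nonneg q n m
  rcases Nat.even_or_odd n with hn | hn
  · rw [hn.neg_one_pow, one_mul] at hE
    rw [if_pos hn, if_pos hn]
    rw [hg] at hE
    split_ifs at hE ⊢ <;> omega
  · have hn' := Nat.not_even_iff_odd.mpr hn
    rw [hn.neg_one_pow] at hE
    rw [if_neg hn', if_neg hn']
    rw [hg] at hE
    split_ifs at hE ⊢ <;> omega

lemma main_pointwise (q n : ℕ) (m : ℕ∞) :
    (∑ j ∈ Finset.range n, if Even j then ((q + j).choose q : ℝ≥0∞) * chE (q + 1 + j) m else 0)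
      + (if Even n then EeE q n m else 0)
    = chiE (q + 1) m
      + (∑ j ∈ Finset.range n, if Even j then 0 else ((q + j).choose q : ℝ≥0∞) * chE (q + 1 + j) m)
      + (if Even n then 0 else EeE q n m) := by
  induction m using ENat.recTopCoe with
  | top =>
      have hchi : chiE (q + 1) (⊤ : ℕ∞) = 1 := by simp [chiE]
      rcases Nat.eq_zero_or_pos n with rfl | hn
      · simp [EeE, hchi]
      · have hLHS : (∑ j ∈ Finset.range n,
            if Even j then ((q + j).choose q : ℝ≥0∞) * chE (q + 1 + j) (⊤ : ℕ∞) else 0) = ⊤ := by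
          rw [ENNReal.sum_eq_top]
          refine ⟨0, Finset.mem_range.mpr hn, ?_⟩
          rw [if_pos (Even.zero)]
          simp only [chE, ENat.recTopCoe_top]
          rw [ENNReal.mul_top]
          exact_mod_cast Nat.pos_iff_ne_zero.mp (Nat.choose_pos (by omega))
        rw [hLHS, hchi]
        rcases Nat.even_or_odd n with hn2 | hn2
        · -- n even, n ≥ 2, so j = 1 in the odd sum gives ⊤
          have hM : (∑ j ∈ Finset.range n,
              if Even j then 0 else ((q + j).choose q : ℝ≥0∞) * chE (q + 1 + j) (⊤ : ℕ∞)) = ⊤ := by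
            rw [ENNReal.sum_eq_top]
            have h2n : 2 ≤ n := by
              rcases hn2 with ⟨t, rfl⟩; omega
            refine ⟨1, Finset.mem_range.mpr (by omega), ?_⟩
            rw [if_neg (by decide)]
            simp only [chE, ENat.recTopCoe_top]
            rw [ENNReal.mul_top]
            exact_mod_cast Nat.pos_iff_ne_zero.mp (Nat.choose_pos (by omega))
          rw [hM]
          simp
        · have hn' := Nat.not_even_iff_odd.mpr hn2
          rw [if_neg hn', if_neg hn']
          simp only [EeE, ENat.recTopCoe_top, if_neg (by omega : ¬ n = 0)]
          simp
      
  | coe m =>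
      have h := congrArg (fun x : ℕ => (x : ℝ≥0∞)) (main_nat q n m)
      simp only [Nat.cast_add, Nat.cast_sum, Nat.cast_ite, Nat.cast_zero, Nat.cast_mul,
        Nat.cast_one] at h
      simp only [chiE, chE, EeE, ENat.recTopCoe_coe, Nat.cast_le]
      convert h using 2 <;> simp

open MeasureTheory Filter

section MeasureLayer

variable {Ω : Type*} [MeasurableSpace Ω]

/-- The number of indices `i` with `ω ∈ A i`, as an extended natural. -/
noncomputable def cntf (A : ℕ → Set Ω) (ω : Ω) : ℕ∞ := {i | ω ∈ A i}.encard

lemma le_cnt_iff (A : ℕ → Set Ω) (k : ℕ) (ω : Ω) :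
    (k : ℕ∞) ≤ cntf A ω ↔ ∃ s : Finset ℕ, s.card = k ∧ ∀ i ∈ s, ω ∈ A i := by
  constructor
  · intro h
    obtain ⟨t, hsub, henc⟩ := Set.exists_subset_encard_eq h
    have htf : t.Finite := Set.finite_of_encard_eq_coe henc
    refine ⟨htf.toFinset, ?_, ?_⟩
    · have := htf.encard_eq_coe_toFinset_card
      rw [this] at henc
      exact_mod_cast henc
    · intro i hi
      exact hsub (htf.mem_toFinset.mp hi)
  · rintro ⟨s, hcard, hmem⟩
    calc (k : ℕ∞) = (↑s : Set ℕ).encard := by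
          rw [Set.encard_coe_eq_coe_finsetCard, hcard]
      _ ≤ cntf A ω := Set.encard_le_encard (fun i hi => hmem i hi)

lemma unionInter_eq_cnt (A : ℕ → Set Ω) (k : ℕ) :
    unionInter A k = {ω | (k : ℕ∞) ≤ cntf A ω} := by
  ext ω
  simp only [unionInter, Set.mem_iUnion, Set.mem_iInter, Set.mem_setOf_eq, le_cnt_iff]
  constructor
  · rintro ⟨⟨s, hs⟩, h⟩; exact ⟨s, hs, h⟩
  · rintro ⟨s, hs, h⟩; exact ⟨⟨s, hs⟩, h⟩

lemma measurableSet_inter_finset (A : ℕ → Set Ω) (hA : ∀ i, MeasurableSet (A i)) (s : Finset ℕ) :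
    MeasurableSet (⋂ i ∈ s, A i) :=
  Set.Finite.measurableSet_biInter (s.finite_toSet) (fun i _ => hA i)

lemma measurableSet_le_cnt (A : ℕ → Set Ω) (hA : ∀ i, MeasurableSet (A i)) (k : ℕ) :
    MeasurableSet {ω | (k : ℕ∞) ≤ cntf A ω} := by
  rw [← unionInter_eq_cnt]
  exact MeasurableSet.iUnion fun s => measurableSet_inter_finset A hA s

lemma enat_eq_coe_iff (a : ℕ∞) (m : ℕ) :
    a = (m : ℕ∞) ↔ ((m : ℕ∞) ≤ a ∧ ¬ (((m + 1 : ℕ) : ℕ∞) ≤ a)) := by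
  induction a using ENat.recTopCoe with
  | top => simp
  | coe a =>
      rw [Nat.cast_inj, Nat.cast_le, Nat.cast_le]
      omega

lemma enat_eq_top_iff (a : ℕ∞) : a = ⊤ ↔ ∀ k : ℕ, (k : ℕ∞) ≤ a := by
  induction a using ENat.recTopCoe with
  | top => simp
  | coe a =>
      simp only [Nat.cast_le]
      constructor
      · intro h; exact absurd h (by simp)
      · intro h; exact absurd (h (a + 1)) (by omega)

lemma measurable_cntf (A : ℕ → Set Ω) (hA : ∀ i, MeasurableSet (A i)) :
    Measurable (cntf A) := by
  apply measurable_to_countable'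
  intro x
  induction x using ENat.recTopCoe with
  | top =>
      have : cntf A ⁻¹' {⊤} = ⋂ k : ℕ, {ω | (k : ℕ∞) ≤ cntf A ω} := by
        ext ω
        simp only [Set.mem_preimage, Set.mem_singleton_iff, Set.mem_iInter, Set.mem_setOf_eq]
        exact enat_eq_top_iff _
      rw [this]
      exact MeasurableSet.iInter fun k => measurableSet_le_cnt A hA k
  | coe m =>
      have : cntf A ⁻¹' {(m : ℕ∞)} =
          {ω | (m : ℕ∞) ≤ cntf A ω} \ {ω | ((m + 1 : ℕ) : ℕ∞) ≤ cntf A ω} := by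
        ext ω
        simp only [Set.mem_preimage, Set.mem_singleton_iff, Set.mem_diff, Set.mem_setOf_eq]
        exact enat_eq_coe_iff _ _
      rw [this]
      exact (measurableSet_le_cnt A hA m).diff (measurableSet_le_cnt A hA (m + 1))

lemma measurable_comp_cntf (A : ℕ → Set Ω) (hA : ∀ i, MeasurableSet (A i)) (g : ℕ∞ → ℝ≥0∞) :
    Measurable (fun ω => g (cntf A ω)) :=
  (Measurable.of_discrete (f := g)).comp (measurable_cntf A hA)

lemma succ_le_choose (N l : ℕ) (hl : 1 ≤ l) : N + 1 ≤ (l + N).choose l := by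
  induction l with
  | zero => omega
  | succ l ih =>
      rcases Nat.eq_zero_or_pos l with rfl | hl'
      · rw [show 0 + 1 + N = N + 1 by omega, Nat.choose_one_right]
      · have h := ih hl'
        have : (l + 1 + N).choose (l + 1) = (l + N).choose l + (l + N).choose (l + 1) := by
          rw [show l + 1 + N = (l + N) + 1 by omega]
          exact Nat.choose_succ_succ (l + N) l
        omega

/-- The key counting identity: the sum over all `l`-subsets of the indicator of the
intersection equals `choose (cntf A ω) l`. -/
lemma tsum_indicator_eq (A : ℕ → Set Ω) (l : ℕ) (hl : 1 ≤ l) (ω : Ω) :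
    ∑' (s : {s : Finset ℕ // s.card = l}), (⋂ i ∈ (s : Finset ℕ), A i).indicator
      (1 : Ω → ℝ≥0∞) ω = chE l (cntf A ω) := by
  classical
  set T : Set ℕ := {i | ω ∈ A i} with hT
  set h : Finset ℕ → ℝ≥0∞ := fun s => if s.card = l ∧ ↑s ⊆ T then 1 else 0 with hh
  have step1 : ∑' (s : {s : Finset ℕ // s.card = l}), (⋂ i ∈ (s : Finset ℕ), A i).indicator
      (1 : Ω → ℝ≥0∞) ω = ∑' (s : {s : Finset ℕ // s.card = l}), h ↑s := by
    refine tsum_congr fun s => ?_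
    by_cases hc : ω ∈ ⋂ i ∈ (s : Finset ℕ), A i
    · rw [Set.indicator_of_mem hc]
      have hsub : ↑(s : Finset ℕ) ⊆ T := by
        intro i hi
        simp only [Set.mem_iInter] at hc
        exact hc i hi
      simp only [hh]
      rw [if_pos ⟨s.2, hsub⟩]
      rfl
    · rw [Set.indicator_of_notMem hc]
      simp only [hh]
      rw [if_neg]
      rintro ⟨-, hsub⟩
      refine hc (Set.mem_iInter.mpr fun i => Set.mem_iInter.mpr fun hi => ?_)
      exact hsub hi
  rw [step1]
  have step2 : ∑' (s : {s : Finset ℕ // s.card = l}), h ↑s = ∑' (s : Finset ℕ), h s := by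
    refine tsum_subtype_eq_of_support_subset (s := {s : Finset ℕ | s.card = l}) ?_
    intro s hs
    simp only [Function.mem_support, hh] at hs
    by_contra hcard
    exact hs (if_neg (by simp only [Set.mem_setOf_eq] at hcard; tauto))
  rw [step2]
  rcases T.finite_or_infinite with hfin | hinf
  · have hcnt : cntf A ω = (hfin.toFinset.card : ℕ∞) := hfin.encard_eq_coe_toFinset_card
    rw [hcnt]
    simp only [chE, ENat.recTopCoe_coe]
    have hsum : ∑' (s : Finset ℕ), h s = ∑ s ∈ Finset.powersetCard l hfin.toFinset, h s := by
      refine tsum_eq_sum fun s hs => ?_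
      simp only [hh]
      rw [if_neg]
      rintro ⟨hcard, hsub⟩
      exact hs (Finset.mem_powersetCard.mpr ⟨fun i hi => hfin.mem_toFinset.mpr (hsub hi), hcard⟩)
    rw [hsum]
    have : ∀ s ∈ Finset.powersetCard l hfin.toFinset, h s = 1 := by
      intro s hs
      obtain ⟨hsub, hcard⟩ := Finset.mem_powersetCard.mp hs
      exact if_pos ⟨hcard, fun i hi => hfin.mem_toFinset.mp (hsub hi)⟩
    rw [Finset.sum_congr rfl this, Finset.sum_const, Finset.card_powersetCard]
    simp
  · have hcnt : cntf A ω = ⊤ := hinf.encard_eq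
    rw [hcnt]
    simp only [chE, ENat.recTopCoe_top]
    by_contra hne
    obtain ⟨N, hN⟩ := ENNReal.exists_nat_gt hne
    obtain ⟨F, hFsub, hFcard⟩ := hinf.exists_subset_card_eq (l + N)
    have hbound : ((l + N).choose l : ℝ≥0∞) ≤ ∑' (s : Finset ℕ), h s := by
      have h1 : ∀ s ∈ Finset.powersetCard l F, h s = 1 := by
        intro s hs
        obtain ⟨hsub, hcard⟩ := Finset.mem_powersetCard.mp hs
        exact if_pos ⟨hcard, (Finset.coe_subset.mpr hsub).trans hFsub⟩
      calc ((l + N).choose l : ℝ≥0∞) = ∑ s ∈ Finset.powersetCard l F, h s := by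
            rw [Finset.sum_congr rfl h1, Finset.sum_const, Finset.card_powersetCard, hFcard]
            simp
        _ ≤ ∑' (s : Finset ℕ), h s := ENNReal.sum_le_tsum _
    have hNc : (N : ℝ≥0∞) < ((l + N).choose l : ℝ≥0∞) := by
      have := succ_le_choose N l hl
      exact_mod_cast Nat.lt_of_lt_of_le (Nat.lt_succ_self N) this
    exact absurd (hbound.trans hN.le) (not_le.mpr hNc)

lemma S_eq_lintegral (μ : Measure Ω) (A : ℕ → Set Ω) (hA : ∀ i, MeasurableSet (A i))
    (l : ℕ) (hl : 1 ≤ l) :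
    S μ A l = ∫⁻ ω, chE l (cntf A ω) ∂μ := by
  unfold S
  have h1 : ∀ s : {s : Finset ℕ // s.card = l}, μ (⋂ i ∈ (s : Finset ℕ), A i)
      = ∫⁻ ω, (⋂ i ∈ (s : Finset ℕ), A i).indicator (1 : Ω → ℝ≥0∞) ω ∂μ := fun s =>
    (lintegral_indicator_one (measurableSet_inter_finset A hA _)).symm
  rw [tsum_congr h1, ← lintegral_tsum (fun s =>
    ((measurable_one.indicator (measurableSet_inter_finset A hA _)).aemeasurable))]
  exact lintegral_congr fun ω => tsum_indicator_eq A l hl ω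

lemma mu_unionInter_eq (μ : Measure Ω) (A : ℕ → Set Ω) (hA : ∀ i, MeasurableSet (A i)) (k : ℕ) :
    μ (unionInter A k) = ∫⁻ ω, chiE k (cntf A ω) ∂μ := by
  have h1 : (fun ω => chiE k (cntf A ω))
      = fun ω => Set.indicator {ω | (k : ℕ∞) ≤ cntf A ω} (1 : Ω → ℝ≥0∞) ω := by
    funext ω
    simp [chiE, Set.indicator_apply]
  rw [h1, lintegral_indicator_one (measurableSet_le_cnt A hA k), unionInter_eq_cnt]

end MeasureLayer

/-- Theorem 1.1: the generalized inclusion-exclusion identity (with convergent series)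
holds for a given `k` iff all `S_l` are finite and `l^(k-1) * S_l → 0`. -/
theorem stmt2 {Ω : Type*} [MeasurableSpace Ω] (μ : Measure Ω) [IsProbabilityMeasure μ]
    (A : ℕ → Set Ω) (hA : ∀ i, MeasurableSet (A i)) (k : ℕ) (hk : 1 ≤ k) :
    ((∀ l, 1 ≤ l → S μ A l ≠ ∞) ∧
      Tendsto (fun n => ∑ j ∈ Finset.range n,
          (-1 : ℝ) ^ j * (Nat.choose (j + k - 1) (k - 1)) * (S μ A (j + k)).toReal)
        atTop (nhds (μ (unionInter A k)).toReal)) ↔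
    ((∀ l, 1 ≤ l → S μ A l ≠ ∞) ∧
      Tendsto (fun l : ℕ => (l : ℝ) ^ (k - 1) * (S μ A l).toReal) atTop (nhds 0)) := by
  obtain ⟨q, rfl⟩ : ∃ q, k = q + 1 := ⟨k - 1, by omega⟩
  have hfun : (fun n => ∑ j ∈ Finset.range n,
        (-1 : ℝ) ^ j * (Nat.choose (j + (q + 1) - 1) ((q + 1) - 1)) * (S μ A (j + (q + 1))).toReal)
      = (fun n => ∑ j ∈ Finset.range n,
        (-1 : ℝ) ^ j * ((q + j).choose q : ℝ) * (S μ A (q + 1 + j)).toReal) := by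
    funext n
    refine Finset.sum_congr rfl fun j _ => ?_
    rw [show j + (q + 1) - 1 = q + j by omega, show q + 1 - 1 = q by omega,
      show j + (q + 1) = q + 1 + j by omega]
  rw [hfun]
  simp only [Nat.add_sub_cancel]
  refine and_congr_right fun hS => ?_
  -- setup
  have hmeas : ∀ g : ℕ∞ → ℝ≥0∞, Measurable fun ω => g (cntf A ω) := measurable_comp_cntf A hA
  set U : ℕ → ℝ≥0∞ := fun n => ∫⁻ ω, EeE q n (cntf A ω) ∂μ with hU
  have I1 : ∀ n, U n + U (n + 1) = ((q + n).choose q : ℝ≥0∞) * S μ A (q + 1 + n) := by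
    intro n
    simp only [hU]
    rw [← lintegral_add_left (hmeas (EeE q n)), S_eq_lintegral μ A hA _ (by omega),
      ← lintegral_const_mul _ (hmeas (chE (q + 1 + n)))]
    exact lintegral_congr fun ω => EeE_add q n (cntf A ω)
  have hUne : ∀ n, U n ≠ ⊤ := by
    intro n
    have hle : U n ≤ ((q + n).choose q : ℝ≥0∞) * S μ A (q + 1 + n) := I1 n ▸ le_self_add
    exact ne_top_of_le_ne_top (ENNReal.mul_ne_top (ENNReal.natCast_ne_top _)
      (hS (q + 1 + n) (by omega))) hle
  have hSum : ∀ n, (U n).toReal + (U (n + 1)).toReal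
      = ((q + n).choose q : ℝ) * (S μ A (q + 1 + n)).toReal := by
    intro n
    rw [← ENNReal.toReal_add (hUne n) (hUne (n + 1)), I1 n, ENNReal.toReal_mul,
      ENNReal.toReal_natCast]
  have I2 : ∀ n, (∑ j ∈ Finset.range n,
        if Even j then ((q + j).choose q : ℝ≥0∞) * S μ A (q + 1 + j) else 0)
        + (if Even n then U n else 0)
      = μ (unionInter A (q + 1))
        + (∑ j ∈ Finset.range n,
            if Even j then 0 else ((q + j).choose q : ℝ≥0∞) * S μ A (q + 1 + j))
        + (if Even n then 0 else U n) := by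
    intro n
    have e1 : (∑ j ∈ Finset.range n,
          if Even j then ((q + j).choose q : ℝ≥0∞) * S μ A (q + 1 + j) else 0)
        = ∫⁻ ω, (∑ j ∈ Finset.range n,
            if Even j then ((q + j).choose q : ℝ≥0∞) * chE (q + 1 + j) (cntf A ω) else 0) ∂μ := by
      rw [lintegral_finset_sum _ (fun j _ =>
        hmeas (fun m => if Even j then ((q + j).choose q : ℝ≥0∞) * chE (q + 1 + j) m else 0))]
      refine Finset.sum_congr rfl fun j _ => ?_
      split_ifs with hj
      · rw [lintegral_const_mul _ (hmeas (chE (q + 1 + j))), S_eq_lintegral μ A hA _ (by omega)]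
      · simp
    have e2 : (∑ j ∈ Finset.range n,
          if Even j then 0 else ((q + j).choose q : ℝ≥0∞) * S μ A (q + 1 + j))
        = ∫⁻ ω, (∑ j ∈ Finset.range n,
            if Even j then 0 else ((q + j).choose q : ℝ≥0∞) * chE (q + 1 + j) (cntf A ω)) ∂μ := by
      rw [lintegral_finset_sum _ (fun j _ =>
        hmeas (fun m => if Even j then 0 else ((q + j).choose q : ℝ≥0∞) * chE (q + 1 + j) m))]
      refine Finset.sum_congr rfl fun j _ => ?_
      split_ifs with hj
      · simp
      · rw [lintegral_const_mul _ (hmeas (chE (q + 1 + j))), S_eq_lintegral μ A hA _ (by omega)]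
    have e3 : (if Even n then U n else 0)
        = ∫⁻ ω, (if Even n then EeE q n (cntf A ω) else 0) ∂μ := by
      split_ifs
      · rfl
      · simp
    have e4 : (if Even n then 0 else U n)
        = ∫⁻ ω, (if Even n then 0 else EeE q n (cntf A ω)) ∂μ := by
      split_ifs
      · simp
      · rfl
    rw [e1, e2, e3, e4, mu_unionInter_eq μ A hA (q + 1),
      ← lintegral_add_left (hmeas (fun m => ∑ j ∈ Finset.range n,
          if Even j then ((q + j).choose q : ℝ≥0∞) * chE (q + 1 + j) m else 0)),
      ← lintegral_add_left (hmeas (chiE (q + 1))),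
      ← lintegral_add_left (hmeas (fun m => chiE (q + 1) m + ∑ j ∈ Finset.range n,
          if Even j then 0 else ((q + j).choose q : ℝ≥0∞) * chE (q + 1 + j) m))]
    exact lintegral_congr fun ω => main_pointwise q n (cntf A ω)
  -- real layer
  set L : ℝ := (μ (unionInter A (q + 1))).toReal with hL
  have hμfin : μ (unionInter A (q + 1)) ≠ ⊤ := measure_ne_top μ _
  have hfin1 : ∀ n, (∑ j ∈ Finset.range n,
      if Even j then ((q + j).choose q : ℝ≥0∞) * S μ A (q + 1 + j) else 0) ≠ ⊤ := by
    intro n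
    refine ENNReal.sum_ne_top.mpr fun j _ => ?_
    split_ifs
    · exact ENNReal.mul_ne_top (ENNReal.natCast_ne_top _) (hS (q + 1 + j) (by omega))
    · simp
  have hfin2 : ∀ n, (∑ j ∈ Finset.range n,
      if Even j then 0 else ((q + j).choose q : ℝ≥0∞) * S μ A (q + 1 + j)) ≠ ⊤ := by
    intro n
    refine ENNReal.sum_ne_top.mpr fun j _ => ?_
    split_ifs
    · simp
    · exact ENNReal.mul_ne_top (ENNReal.natCast_ne_top _) (hS (q + 1 + j) (by omega))
  have hTn : ∀ n, (∑ j ∈ Finset.range n,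
        (-1 : ℝ) ^ j * ((q + j).choose q : ℝ) * (S μ A (q + 1 + j)).toReal)
      = L + (if Even n then -(U n).toReal else (U n).toReal) := by
    intro n
    have h2 := congrArg ENNReal.toReal (I2 n)
    have hiteU1 : (if Even n then U n else 0) ≠ ⊤ := by
      split_ifs
      · exact hUne n
      · simp
    have hiteU2 : (if Even n then 0 else U n) ≠ ⊤ := by
      split_ifs
      · simp
      · exact hUne n
    have hterm1 : ∀ j ∈ Finset.range n,
        (if Even j then ((q + j).choose q : ℝ≥0∞) * S μ A (q + 1 + j) else 0) ≠ ⊤ := by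
      intro j _
      split_ifs
      · exact ENNReal.mul_ne_top (ENNReal.natCast_ne_top _) (hS (q + 1 + j) (by omega))
      · simp
    have hterm2 : ∀ j ∈ Finset.range n,
        (if Even j then 0 else ((q + j).choose q : ℝ≥0∞) * S μ A (q + 1 + j)) ≠ ⊤ := by
      intro j _
      split_ifs
      · simp
      · exact ENNReal.mul_ne_top (ENNReal.natCast_ne_top _) (hS (q + 1 + j) (by omega))
    rw [ENNReal.toReal_add (hfin1 n) hiteU1,
      ENNReal.toReal_add (ENNReal.add_ne_top.mpr ⟨hμfin, hfin2 n⟩) hiteU2,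
      ENNReal.toReal_add hμfin (hfin2 n)] at h2
    rw [ENNReal.toReal_sum hterm1, ENNReal.toReal_sum hterm2] at h2
    simp only [apply_ite ENNReal.toReal, ENNReal.toReal_mul, ENNReal.toReal_natCast,
      ENNReal.toReal_zero] at h2
    rw [← hL] at h2
    have hsplit : ∀ j ∈ Finset.range n,
        (-1 : ℝ) ^ j * ((q + j).choose q : ℝ) * (S μ A (q + 1 + j)).toReal
        = (if Even j then ((q + j).choose q : ℝ) * (S μ A (q + 1 + j)).toReal else 0)
          - (if Even j then 0 else ((q + j).choose q : ℝ) * (S μ A (q + 1 + j)).toReal) := by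
      intro j _
      split_ifs with hj
      · rw [hj.neg_one_pow]; ring
      · rw [(Nat.not_even_iff_odd.mp hj).neg_one_pow]; ring
    rw [Finset.sum_congr rfl hsplit, Finset.sum_sub_distrib]
    rcases Nat.even_or_odd n with hn | hn
    · rw [if_pos hn]
      rw [if_pos hn, if_pos hn] at h2
      linarith
    · have hn' := Nat.not_even_iff_odd.mpr hn
      rw [if_neg hn']
      rw [if_neg hn', if_neg hn'] at h2
      linarith
  -- the two directions
  constructor
  · intro hF
    have hU0 : Tendsto (fun n => (U n).toReal) atTop (nhds 0) := by
      have h0 : Tendsto (fun n => (∑ j ∈ Finset.range n,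
          (-1 : ℝ) ^ j * ((q + j).choose q : ℝ) * (S μ A (q + 1 + j)).toReal) - L)
          atTop (nhds 0) := by
        simpa using hF.sub_const L
      have habs := h0.abs
      rw [abs_zero] at habs
      have heq : (fun n => (U n).toReal) = fun n => |(∑ j ∈ Finset.range n,
          (-1 : ℝ) ^ j * ((q + j).choose q : ℝ) * (S μ A (q + 1 + j)).toReal) - L| := by
        funext n
        rw [hTn n]
        split_ifs
        · rw [show L + -(U n).toReal - L = -(U n).toReal by ring, abs_neg,
            abs_of_nonneg ENNReal.toReal_nonneg]
        · rw [show L + (U n).toReal - L = (U n).toReal by ring,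
            abs_of_nonneg ENNReal.toReal_nonneg]
      rw [heq]
      exact habs
    have hcS : Tendsto (fun n => ((q + n).choose q : ℝ) * (S μ A (q + 1 + n)).toReal)
        atTop (nhds 0) := by
      have : (fun n => ((q + n).choose q : ℝ) * (S μ A (q + 1 + n)).toReal)
          = fun n => (U n).toReal + (U (n + 1)).toReal := funext fun n => (hSum n).symm
      rw [this]
      simpa using hU0.add ((tendsto_add_atTop_iff_nat 1).mpr hU0)
    rw [← tendsto_add_atTop_iff_nat (q + 1)]
    refine squeeze_zero (fun n => by positivity)
      (g := fun n => ((q + 1) ^ q * q.factorial : ℝ)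
        * (((q + n).choose q : ℝ) * (S μ A (q + 1 + n)).toReal)) (fun n => ?_) ?_
    · have hnat : (n + (q + 1)) ^ q ≤ (q + 1) ^ q * (q.factorial * ((q + n).choose q)) := by
        calc (n + (q + 1)) ^ q ≤ ((q + 1) * (n + 1)) ^ q := by
              refine Nat.pow_le_pow_left ?_ q
              have h1 : (q + 1) * (n + 1) = (q + 1) * n + (q + 1) := by ring
              have h2 : n ≤ (q + 1) * n := Nat.le_mul_of_pos_left n (by omega)
              omega
          _ = (q + 1) ^ q * (n + 1) ^ q := by rw [mul_pow]
          _ ≤ (q + 1) ^ q * (q.factorial * ((q + n).choose q)) := by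
              refine Nat.mul_le_mul_left _ ?_
              have h := Nat.pow_sub_le_descFactorial (q + n) q
              rw [Nat.descFactorial_eq_factorial_mul_choose] at h
              rw [show q + n + 1 - q = n + 1 by omega] at h
              exact h
      have hS' : S μ A (n + (q + 1)) = S μ A (q + 1 + n) := by rw [Nat.add_comm]
      rw [hS']
      calc ((n + (q + 1) : ℕ) : ℝ) ^ q * (S μ A (q + 1 + n)).toReal
          ≤ ((q + 1) ^ q * (q.factorial * ((q + n).choose q)) : ℕ)
            * (S μ A (q + 1 + n)).toReal := by
            refine mul_le_mul_of_nonneg_right ?_ ENNReal.toReal_nonneg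
            exact_mod_cast hnat
        _ = ((q + 1) ^ q * q.factorial : ℝ)
            * (((q + n).choose q : ℝ) * (S μ A (q + 1 + n)).toReal) := by push_cast; ring
    · simpa using hcS.const_mul (((q + 1) ^ q * q.factorial : ℝ))
  · intro htd
    have h1 : Tendsto (fun n => ((n + (q + 1) : ℕ) : ℝ) ^ q
        * (S μ A (n + (q + 1))).toReal) atTop (nhds 0) :=
      (tendsto_add_atTop_iff_nat (q + 1)).mpr htd
    have hU0 : Tendsto (fun n => (U n).toReal) atTop (nhds 0) := by
      refine squeeze_zero (fun n => ENNReal.toReal_nonneg) (fun n => ?_) h1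
      have hle1 : (U n).toReal ≤ (U n).toReal + (U (n + 1)).toReal :=
        le_add_of_nonneg_right ENNReal.toReal_nonneg
      rw [hSum n] at hle1
      refine hle1.trans ?_
      have hS' : S μ A (n + (q + 1)) = S μ A (q + 1 + n) := by rw [Nat.add_comm]
      rw [hS']
      refine mul_le_mul_of_nonneg_right ?_ ENNReal.toReal_nonneg
      have hnat : (q + n).choose q ≤ (n + (q + 1)) ^ q :=
        (Nat.choose_le_pow _ _).trans (Nat.pow_le_pow_left (by omega) q)
      exact_mod_cast hnat
    have h0 : Tendsto (fun n => (∑ j ∈ Finset.range n,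
        (-1 : ℝ) ^ j * ((q + j).choose q : ℝ) * (S μ A (q + 1 + j)).toReal) - L)
        atTop (nhds 0) := by
      refine squeeze_zero_norm (fun n => ?_) hU0
      rw [hTn n]
      split_ifs
      · rw [show L + -(U n).toReal - L = -(U n).toReal by ring]
        simp [abs_of_nonneg ENNReal.toReal_nonneg]
      · rw [show L + (U n).toReal - L = (U n).toReal by ring]
        simp [abs_of_nonneg ENNReal.toReal_nonneg]
    have := h0.add_const L
    simpa using this
end

section
/- Let X: Ω → ℤ₊ be a random variable with binomial moments S_j := E[C(X,j)]. Suppose S_l < ∞ and 2d+k+1 ≤ l for d ∈ ℤ₊, k ∈ ℕ. Then Σ_{j=0}^{2d+1} (-1)^j C(j+k-1, k-1) S_{j+k} ≤ Pr(X ≥ k), and if 2r+k ≤ l then Pr(X ≥ k) ≤ Σ_{j=0}^{2r} (-1)^j C(j+k-1, k-1) S_{j+k}. -/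
/-!
Writing `K = k - 1`, the statement is the expectation of a pointwise inequality between the
truncated sum `B_M(n) = ∑_{j ≤ M} (-1)^j C(j+K, K) C(n, j+K+1)` and the indicator of `K < n`.
Pascal's rule together with `C(j+K, K) C(n, j+K) = C(n, K) C(n-K, j)` shows that
`B_M(n+1) - B_M(n) = C(n, K) ∑_{j ≤ M} (-1)^j C(n-K, j)`, a truncated alternating binomial sum,
which equals `(-1)^M C(n-K-1, M)` for `n > K`. Hence `(-1)^M (B_M(n) - [K < n])` is nondecreasing
in `n` (at `n = K` both terms jump by one) and vanishes at `n = 0`.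
-/

open MeasureTheory Filter ENNReal

noncomputable def binomMoment {Ω : Type*} [MeasurableSpace Ω] (μ : Measure Ω) (X : Ω → ℕ)
    (j : ℕ) : ℝ≥0∞ :=
  ∫⁻ ω, ((X ω).choose j : ℝ≥0∞) ∂μ

open Finset

theorem Nat.choose_le_choose_mul_one_add_choose {j l : ℕ} (hjl : j ≤ l) (n : ℕ) :
    n.choose j ≤ l.choose j * (1 + n.choose l) := by
  rcases le_or_gt n l with hnl | hln
  · calc n.choose j ≤ l.choose j := Nat.choose_le_choose j hnl
      _ ≤ l.choose j * (1 + n.choose l) := Nat.le_mul_of_pos_right _ (by omega)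
  · calc n.choose j ≤ n.choose j * (n - j).choose (l - j) :=
          Nat.le_mul_of_pos_right _ (Nat.choose_pos (by omega))
      _ = l.choose j * n.choose l := by rw [← Nat.choose_mul hjl, mul_comm]
      _ ≤ l.choose j * (1 + n.choose l) := by gcongr; omega

theorem Nat.add_choose_mul_choose_add (j K n : ℕ) :
    (j + K).choose K * n.choose (j + K) = n.choose K * (n - K).choose j := by
  rw [mul_comm, Nat.choose_mul (Nat.le_add_left K j), Nat.add_sub_cancel]

theorem neg_one_pow_mul_alternating_sum_range_choose (M m : ℕ) :
    (-1 : ℤ) ^ M * ∑ j ∈ range (M + 1), (-1) ^ j * ((m + 1).choose j : ℤ) = m.choose M := by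
  rw [Int.alternating_sum_range_choose_eq_choose, ← mul_assoc, ← mul_pow]
  simp

def bonferroniSum (K M n : ℕ) : ℤ :=
  ∑ j ∈ range (M + 1), (-1) ^ j * (j + K).choose K * n.choose (j + K + 1)

theorem bonferroniSum_succ (K M n : ℕ) :
    bonferroniSum K M (n + 1) = bonferroniSum K M n +
      n.choose K * ∑ j ∈ range (M + 1), (-1) ^ j * ((n - K).choose j : ℤ) := by
  simp only [bonferroniSum, mul_sum, ← sum_add_distrib]
  refine sum_congr rfl fun j _ => ?_
  have key : ((j + K).choose K * n.choose (j + K) : ℤ) = n.choose K * (n - K).choose j := by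
    exact_mod_cast Nat.add_choose_mul_choose_add j K n
  rw [Nat.choose_succ_succ', Nat.cast_add]
  linear_combination (-1 : ℤ) ^ j * key

theorem neg_one_pow_mul_bonferroniSum_sub_nonneg (K M n : ℕ) :
    0 ≤ (-1 : ℤ) ^ M * (bonferroniSum K M n - if K < n then 1 else 0) := by
  induction n with
  | zero => simp [bonferroniSum]
  | succ n ih =>
    rw [bonferroniSum_succ]
    rcases lt_trichotomy n K with hnK | rfl | hKn
    · rw [if_neg (by omega)]
      rw [if_neg (by omega)] at ih
      simpa [Nat.choose_eq_zero_of_lt hnK] using ih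
    · have hzero : ∑ j ∈ range (M + 1), (-1) ^ j * ((0 : ℕ).choose j : ℤ) = 1 := by
        simp [sum_range_succ']
      rw [if_neg (lt_irrefl n)] at ih
      simpa [if_pos (Nat.lt_succ_self n), hzero] using ih
    · obtain ⟨m, hm⟩ : ∃ m, n - K = m + 1 := ⟨n - K - 1, by omega⟩
      rw [if_pos hKn] at ih
      rw [if_pos (by omega), hm]
      calc 0 ≤ (-1 : ℤ) ^ M * (bonferroniSum K M n - 1) + n.choose K * m.choose M := by
            positivity
        _ = _ := by rw [← neg_one_pow_mul_alternating_sum_range_choose M m]; ring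

theorem bonferroniSum_odd_le (K d n : ℕ) :
    bonferroniSum K (2 * d + 1) n ≤ if K < n then 1 else 0 := by
  have h := neg_one_pow_mul_bonferroniSum_sub_nonneg K (2 * d + 1) n
  rwa [(Odd.neg_one_pow ⟨d, rfl⟩ : (-1 : ℤ) ^ (2 * d + 1) = -1), neg_one_mul, neg_nonneg,
    sub_nonpos] at h

theorem le_bonferroniSum_even (K r n : ℕ) :
    (if K < n then 1 else 0 : ℤ) ≤ bonferroniSum K (2 * r) n := by
  have h := neg_one_pow_mul_bonferroniSum_sub_nonneg K (2 * r) n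
  rwa [(Even.neg_one_pow ⟨r, two_mul r⟩ : (-1 : ℤ) ^ (2 * r) = 1), one_mul, sub_nonneg] at h

section BinomialMoments

variable {Ω : Type*} [MeasurableSpace Ω] {μ : Measure Ω} {X : Ω → ℕ}

theorem measurable_comp_nat {β : Type*} [MeasurableSpace β] (hX : Measurable X) (f : ℕ → β) :
    Measurable fun ω => f (X ω) :=
  measurable_from_nat.comp hX

theorem binomMoment_le [IsProbabilityMeasure μ] {j l : ℕ} (hjl : j ≤ l) :
    binomMoment μ X j ≤ l.choose j * (1 + binomMoment μ X l) := by
  calc binomMoment μ X j ≤ ∫⁻ ω, l.choose j * (1 + ((X ω).choose l : ℝ≥0∞)) ∂μ :=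
        lintegral_mono fun ω => by
          beta_reduce
          exact_mod_cast Nat.choose_le_choose_mul_one_add_choose hjl (X ω)
    _ = l.choose j * (1 + binomMoment μ X l) := by
        rw [lintegral_const_mul' _ _ (natCast_ne_top _), lintegral_add_left measurable_const]
        simp [binomMoment]

theorem binomMoment_ne_top_of_le [IsProbabilityMeasure μ] {j l : ℕ} (hjl : j ≤ l)
    (hl : binomMoment μ X l ≠ ∞) : binomMoment μ X j ≠ ∞ :=
  ne_top_of_le_ne_top (mul_ne_top (natCast_ne_top _) (add_ne_top.2 ⟨one_ne_top, hl⟩))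
    (binomMoment_le hjl)

theorem integrable_choose (hX : Measurable X) {j : ℕ} (hj : binomMoment μ X j ≠ ∞) :
    Integrable (fun ω => ((X ω).choose j : ℝ)) μ := by
  simpa using integrable_toReal_of_lintegral_ne_top
    (measurable_comp_nat hX fun n => (n.choose j : ℝ≥0∞)).aemeasurable hj

theorem toReal_binomMoment (hX : Measurable X) (j : ℕ) :
    (binomMoment μ X j).toReal = ∫ ω, ((X ω).choose j : ℝ) ∂μ := by
  rw [integral_eq_lintegral_of_nonneg_ae (.of_forall fun ω => by positivity)
    (measurable_comp_nat hX fun n => (n.choose j : ℝ)).aestronglyMeasurable]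
  simp [binomMoment]

theorem toReal_measure_lt_eq_integral (hX : Measurable X) (K : ℕ) :
    (μ {ω | K < X ω}).toReal = ∫ ω, ((if K < X ω then 1 else 0 : ℤ) : ℝ) ∂μ := by
  have htail : MeasurableSet {ω | K < X ω} := hX .of_discrete
  rw [← measureReal_def, ← integral_indicator_one htail]
  congr 1 with ω
  by_cases h : K < X ω <;> simp [h]

theorem integrable_ite_lt [IsFiniteMeasure μ] (hX : Measurable X) (K : ℕ) :
    Integrable (fun ω => ((if K < X ω then 1 else 0 : ℤ) : ℝ)) μ :=
  (integrable_const (1 : ℝ)).mono'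
    (measurable_comp_nat hX fun n => ((if K < n then 1 else 0 : ℤ) : ℝ)).aestronglyMeasurable
    (.of_forall fun ω => by split_ifs <;> simp)

variable [IsProbabilityMeasure μ] {l : ℕ} (hX : Measurable X) (hl : binomMoment μ X l ≠ ∞)
include hX hl

theorem integrable_choose_of_le {j : ℕ} (hjl : j ≤ l) :
    Integrable (fun ω => ((X ω).choose j : ℝ)) μ :=
  integrable_choose hX (binomMoment_ne_top_of_le hjl hl)

theorem integrable_bonferroniSum {K M : ℕ} (hKM : M + K + 1 ≤ l) :
    Integrable (fun ω => (bonferroniSum K M (X ω) : ℝ)) μ := by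
  simp only [bonferroniSum]
  push_cast
  exact integrable_finsetSum _ fun j hj =>
    (integrable_choose_of_le hX hl (by rw [mem_range] at hj; omega)).const_mul _

theorem integral_bonferroniSum {K M : ℕ} (hKM : M + K + 1 ≤ l) :
    ∫ ω, (bonferroniSum K M (X ω) : ℝ) ∂μ =
      ∑ j ∈ range (M + 1),
        (-1) ^ j * (j + K).choose K * (binomMoment μ X (j + K + 1)).toReal := by
  simp only [bonferroniSum]
  push_cast
  rw [integral_finsetSum _ fun j hj =>
    (integrable_choose_of_le hX hl (by rw [mem_range] at hj; omega)).const_mul _]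
  simp only [integral_const_mul, toReal_binomMoment hX]

end BinomialMoments

/-- Bonferroni-type inequalities for the tail probability `Pr(X ≥ k)` in terms of
binomial moments. -/
theorem stmt12 {Ω : Type*} [MeasurableSpace Ω] (μ : Measure Ω) [IsProbabilityMeasure μ]
    (X : Ω → ℕ) (hX : Measurable X) (l : ℕ) (hfin : binomMoment μ X l ≠ ∞)
    (k : ℕ) (hk : 1 ≤ k) :
    (∀ d : ℕ, 2 * d + k + 1 ≤ l →
      ∑ j ∈ Finset.range (2 * d + 2),
          (-1 : ℝ) ^ j * (Nat.choose (j + k - 1) (k - 1)) * (binomMoment μ X (j + k)).toReal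
        ≤ (μ {ω | k ≤ X ω}).toReal) ∧
    (∀ r : ℕ, 2 * r + k ≤ l →
      (μ {ω | k ≤ X ω}).toReal ≤
        ∑ j ∈ Finset.range (2 * r + 1),
          (-1 : ℝ) ^ j * (Nat.choose (j + k - 1) (k - 1)) *
            (binomMoment μ X (j + k)).toReal) := by
  obtain ⟨K, rfl⟩ : ∃ K, k = K + 1 := ⟨k - 1, by omega⟩
  simp only [← add_assoc, Nat.add_sub_cancel, Nat.add_one_le_iff,
    toReal_measure_lt_eq_integral hX]
  refine ⟨fun d hd => ?_, fun r hr => ?_⟩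
  · rw [← integral_bonferroniSum hX hfin (by omega)]
    exact integral_mono (integrable_bonferroniSum hX hfin (by omega)) (integrable_ite_lt hX K)
      fun ω => Int.cast_le.2 (bonferroniSum_odd_le K d (X ω))
  · rw [← integral_bonferroniSum hX hfin (by omega)]
    exact integral_mono (integrable_ite_lt hX K) (integrable_bonferroniSum hX hfin (by omega))
      fun ω => Int.cast_le.2 (le_bonferroniSum_even K r (X ω))
end
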